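/- arXiv:1804.11050 — 4 statements merged into one kernel-verified Lean document; each statement's English description precedes it below -/
import Mathlib

section
/- D_1 = {(0,0), (1,0), (1,1)}, and for every integer n ≥ 2, D_n is the disjoint union of D_{n−1} and P_{n−1} \ P_n; that is, D_n = D_{n−1} ⊔ (P_{n−1} \ P_n). -/
/-!
In the coordinates `u = b`, `v = 4a - 3b`, the cone `σ_Z` is the positive quadrant of the lattice
`u ≡ v (mod 4)`, and `P_n` is a staircase on the antidiagonals `u + v = 2n + 2` (for `u > n`) and
`u + v = 2n + 4` (for `u ≤ n`), closed off by `p_n` on the `v`-axis and `s_n` on the `u`-axis.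
Hence `P_n + σ_Z` is the region cut out by these two antidiagonals: one inclusion because the region
is stable under `σ_Z`, the other by descent, since every point of the region outside `P_n` stays in
the region after subtracting one of the generators `(1,0)`, `(1,1)`, `(3,4)` of `σ_Z`.
Both `P_n` and this region are described by linear conditions that do not depend on the parity of
`n`, and comparing them for `n - 1` and `n` is then linear integer arithmetic.
-/

open Pointwise

/-- The submonoid `σ_Z ⊂ ℤ²` of pairs `(a,b)` with `0 ≤ b` and `3b ≤ 4a`. -/
def sigmaZ : Set (ℤ × ℤ) := {a : ℤ × ℤ | 0 ≤ a.2 ∧ 3 * a.2 ≤ 4 * a.1}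

/-- The point `p_n`. -/
def pPt (n : ℤ) : ℤ × ℤ := if Odd n then ((n + 3) / 2, 0) else (n / 2 + 1, 0)

/-- The point `s_n`. -/
def sPt (n : ℤ) : ℤ × ℤ :=
  if Odd n then (3 * (n + 1) / 2, 2 * (n + 1)) else (3 * (n + 2) / 2, 2 * (n + 2))

/-- The point `q^i = (n+1-i, n-2i)`. -/
def qPt (n i : ℤ) : ℤ × ℤ := (n + 1 - i, n - 2 * i)

/-- The point `r^j = (n+1+j, n+1+2j)`. -/
def rPt (n j : ℤ) : ℤ × ℤ := (n + 1 + j, n + 1 + 2 * j)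

/-- The set `P_n ⊂ ℤ²`. -/
def Pset (n : ℤ) : Set (ℤ × ℤ) :=
  {pPt n, sPt n}
    ∪ {x | ∃ i : ℤ, 0 ≤ i ∧ i ≤ (if Odd n then (n - 1) / 2 else (n - 2) / 2) ∧ x = qPt n i}
    ∪ {x | ∃ j : ℤ, 0 ≤ j ∧ j ≤ (if Odd n then (n - 1) / 2 else n / 2) ∧ x = rPt n j}

/-- The set `D_n = σ_Z \ (P_n + σ_Z)`, where `+` is pointwise addition of sets. -/
def Dset (n : ℤ) : Set (ℤ × ℤ) := sigmaZ \ (Pset n + sigmaZ)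

theorem zero_mem_sigmaZ : (0 : ℤ × ℤ) ∈ sigmaZ := by
  simp [sigmaZ]

theorem add_mem_sigmaZ {x y : ℤ × ℤ} (hx : x ∈ sigmaZ) (hy : y ∈ sigmaZ) : x + y ∈ sigmaZ := by
  simp only [sigmaZ, Set.mem_ofPred_eq, Prod.fst_add, Prod.snd_add] at *
  omega

theorem self_subset_add_sigmaZ (A : Set (ℤ × ℤ)) : A ⊆ A + sigmaZ :=
  fun p hp => ⟨p, hp, 0, zero_mem_sigmaZ, add_zero p⟩

theorem add_sigmaZ_add_sigmaZ (A : Set (ℤ × ℤ)) : A + sigmaZ + sigmaZ = A + sigmaZ := by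
  apply Set.Subset.antisymm
  · rw [add_assoc]
    refine Set.add_subset_add_left ?_
    rintro _ ⟨x, hx, y, hy, rfl⟩
    exact add_mem_sigmaZ hx hy
  · exact self_subset_add_sigmaZ _

theorem subset_add_sigmaZ_of_descent {P E : Set (ℤ × ℤ)} (hE : E ⊆ sigmaZ)
    (hstep : ∀ x ∈ E, x ∉ P → ∃ g ∈ sigmaZ, 0 < g.1 ∧ x - g ∈ E) : E ⊆ P + sigmaZ := by
  intro x hx
  induction x using (measure fun x : ℤ × ℤ => x.1.toNat).wf.induction with
  | _ x ih =>
    by_cases hxP : x ∈ P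
    · exact self_subset_add_sigmaZ P hxP
    obtain ⟨g, hg, hg₁, hxg⟩ := hstep x hx hxP
    have hlt : (x - g).1.toNat < x.1.toNat := by
      obtain ⟨hb, hab⟩ := hE hxg
      simp only [Prod.fst_sub, Prod.snd_sub] at hb hab ⊢
      omega
    rw [← add_sigmaZ_add_sigmaZ]
    exact ⟨x - g, ih _ hlt hxg, g, hg, sub_add_cancel x g⟩

/-- The four cases are the points `r^j` (with `s_n` for odd `n`), `q^i`, `p_n` and `s_n`; the parity
conditions in the definition of `P_n` are absorbed by integrality of `a`. -/
theorem mem_Pset_iff {n : ℤ} (hn : 0 ≤ n) {a b : ℤ} :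
    (a, b) ∈ Pset n ↔ (a, b) ∈ sigmaZ ∧
      ((4 * a - 2 * b = 2 * n + 2 ∧ n + 1 ≤ b) ∨
       (4 * a - 2 * b = 2 * n + 4 ∧ 1 ≤ b ∧ b ≤ n) ∨
       (b = 0 ∧ 2 * n + 4 ≤ 4 * a ∧ 4 * a ≤ 2 * n + 6) ∨
       (4 * a = 3 * b ∧ 2 * n + 2 ≤ b ∧ b ≤ 2 * n + 4)) := by
  obtain ⟨hodd, hpar⟩ | ⟨hodd, hpar⟩ : (Odd n ∧ n % 2 = 1) ∨ (¬Odd n ∧ n % 2 = 0) := by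
    rw [Int.odd_iff]; omega
  all_goals
    simp only [Pset, pPt, sPt, qPt, rPt, hodd, if_true, if_false, sigmaZ, Set.mem_union,
      Set.mem_insert_iff, Set.mem_singleton_iff, Set.mem_ofPred_eq, Prod.mk.injEq]
    constructor
    · rintro ((hp | hs) | ⟨i, hi₀, hi, hai, hbi⟩ | ⟨j, hj₀, hj, haj, hbj⟩) <;> omega
    · intro h
      by_cases hs : 4 * a = 3 * b ∧ 2 * n + 2 ≤ b
      · left; left; right; omega
      by_cases hp : b = 0
      · left; left; left; omega
      by_cases hq : b ≤ n
      · left; right; exact ⟨n + 1 - a, by omega⟩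
      · right; exact ⟨a - n - 1, by omega⟩

/-- Equal to `P_n + σ_Z` for `n ≥ 0` (`Pset_add_sigmaZ`). -/
def stairRegion (n : ℤ) : Set (ℤ × ℤ) :=
  {x | x ∈ sigmaZ ∧ ((n + 1 ≤ x.2 ∧ 2 * n + 2 ≤ 4 * x.1 - 2 * x.2) ∨ 2 * n + 4 ≤ 4 * x.1 - 2 * x.2)}

theorem stairRegion_add_sigmaZ_subset (n : ℤ) : stairRegion n + sigmaZ ⊆ stairRegion n := by
  rintro _ ⟨⟨a, b⟩, hx, ⟨c, d⟩, hy, rfl⟩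
  simp only [stairRegion, sigmaZ, Set.mem_ofPred_eq, Prod.mk_add_mk] at hx hy ⊢
  omega

theorem Pset_subset_stairRegion {n : ℤ} (hn : 0 ≤ n) : Pset n ⊆ stairRegion n := by
  rintro ⟨a, b⟩ hx
  rw [mem_Pset_iff hn] at hx
  simp only [stairRegion, sigmaZ, Set.mem_ofPred_eq] at hx ⊢
  omega

theorem sub_generator_mem_stairRegion {n : ℤ} (hn : 0 ≤ n) {x : ℤ × ℤ} (hx : x ∈ stairRegion n)
    (hxP : x ∉ Pset n) :
    x - (1, 0) ∈ stairRegion n ∨ x - (1, 1) ∈ stairRegion n ∨ x - (3, 4) ∈ stairRegion n := by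
  obtain ⟨a, b⟩ := x
  simp only [mem_Pset_iff hn, stairRegion, sigmaZ, Set.mem_ofPred_eq, Prod.mk_sub_mk] at hx hxP ⊢
  omega

theorem Pset_add_sigmaZ {n : ℤ} (hn : 0 ≤ n) : Pset n + sigmaZ = stairRegion n := by
  refine (Set.Subset.trans (Set.add_subset_add_right (Pset_subset_stairRegion hn))
    (stairRegion_add_sigmaZ_subset n)).antisymm ?_
  refine subset_add_sigmaZ_of_descent (fun x hx => hx.1) fun x hx hxP => ?_
  rcases sub_generator_mem_stairRegion hn hx hxP with h | h | h
  · exact ⟨(1, 0), by simp [sigmaZ], one_pos, h⟩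
  · exact ⟨(1, 1), by simp [sigmaZ], one_pos, h⟩
  · exact ⟨(3, 4), by simp [sigmaZ], by norm_num, h⟩

theorem Dset_eq_sdiff_stairRegion {n : ℤ} (hn : 0 ≤ n) : Dset n = sigmaZ \ stairRegion n := by
  rw [Dset, Pset_add_sigmaZ hn]

theorem stairRegion_succ_subset (n : ℤ) : stairRegion (n + 1) ⊆ stairRegion n := by
  rintro ⟨a, b⟩ ⟨hσ, h⟩
  exact ⟨hσ, by omega⟩

theorem stairRegion_diff_succ {n : ℤ} (hn : 0 ≤ n) :
    stairRegion n \ stairRegion (n + 1) = Pset n \ Pset (n + 1) := by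
  ext ⟨a, b⟩
  simp only [Set.mem_sdiff, mem_Pset_iff hn, mem_Pset_iff (by omega : 0 ≤ n + 1), stairRegion,
    sigmaZ, Set.mem_ofPred_eq]
  omega

theorem Dset_succ {n : ℤ} (hn : 0 ≤ n) :
    Dset (n + 1) = Dset n ∪ (Pset n \ Pset (n + 1)) := by
  rw [Dset_eq_sdiff_stairRegion hn, Dset_eq_sdiff_stairRegion (by omega), ← stairRegion_diff_succ hn,
    Set.sdiff_union_sdiff_cancel (fun x hx => hx.1) (stairRegion_succ_subset n)]

theorem disjoint_Dset_Pset (n : ℤ) : Disjoint (Dset n) (Pset n) :=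
  Set.disjoint_left.mpr fun _ hx hp => hx.2 (self_subset_add_sigmaZ _ hp)

theorem Dset_one : Dset 1 = {((0 : ℤ), (0 : ℤ)), (1, 0), (1, 1)} := by
  ext ⟨a, b⟩
  simp only [Dset_eq_sdiff_stairRegion zero_le_one, stairRegion, sigmaZ, Set.mem_sdiff,
    Set.mem_ofPred_eq, Set.mem_insert_iff, Set.mem_singleton_iff, Prod.mk.injEq]
  omega

/-- `D_1 = {(0,0), (1,0), (1,1)}` and, for every integer `n ≥ 2`,
`D_n` is the disjoint union of `D_{n−1}` and `P_{n−1} \ P_n`. -/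
theorem Dset_structure :
    Dset 1 = {((0 : ℤ), (0 : ℤ)), (1, 0), (1, 1)} ∧
    ∀ n : ℕ, 2 ≤ n →
      Dset (n : ℤ) = Dset ((n : ℤ) - 1) ∪ (Pset ((n : ℤ) - 1) \ Pset (n : ℤ)) ∧
      Disjoint (Dset ((n : ℤ) - 1)) (Pset ((n : ℤ) - 1) \ Pset (n : ℤ)) := by
  refine ⟨Dset_one, fun n hn => ?_⟩
  have hn' : (0 : ℤ) ≤ n - 1 := by omega
  constructor
  · simpa using Dset_succ hn'
  · exact (disjoint_Dset_Pset _).mono_right Set.sdiff_subset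
end

section
/- For every integer n ≥ 1, the set D_n has exactly (n+1)(n+2)/2 elements. -/
open Pointwise

/-!
The linear form `2a - b` is nonnegative on `σ_Z` and vanishes only at `0`. On `P_n` it is at
least `n + 1`, with equality only at points whose first coordinate exceeds `n`. Conversely, a point
of `σ_Z` beyond this threshold dominates the point of `P_n` of largest height not exceeding its
own. Hence `D_n` consists of the points of `σ_Z` with `2a - b ≤ n`, together with those on the
line `2a - b = n + 1` with `a ≤ n`. The line `2a - b = u` meets `σ_Z` in `u + 1` points for even
`u` and in `u` points for odd `u`; the `⌊(n + 1) / 2⌋` extra points on the line `2a - b = n + 1`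
make up for the odd lines, so `|D_n| = 1 + 2 + ⋯ + (n + 1)`.
-/

def farRegion (n : ℤ) : Set (ℤ × ℤ) :=
  {x | n + 1 < 2 * x.1 - x.2 ∨ (2 * x.1 - x.2 = n + 1 ∧ n < x.1)}

lemma pPt_eq (n : ℤ) : pPt n = ((n + 3) / 2, 0) := by
  unfold pPt
  split_ifs with h
  · rfl
  · rw [Int.not_odd_iff] at h
    simp only [Prod.mk.injEq, and_true]
    omega

lemma sPt_eq (n : ℤ) : sPt n = (3 * ((n + 2) / 2), 4 * ((n + 2) / 2)) := by
  unfold sPt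
  split_ifs with h <;> [rw [Int.odd_iff] at h; rw [Int.not_odd_iff] at h] <;>
    ext <;> (simp only; omega)

-- Floor division absorbs the parity cases in the definition of `P_n`.
lemma mem_Pset_iff_s7 {n : ℤ} {p : ℤ × ℤ} :
    p ∈ Pset n ↔ p = ((n + 3) / 2, 0) ∨ p = (3 * ((n + 2) / 2), 4 * ((n + 2) / 2)) ∨
      (∃ i, 0 ≤ i ∧ i ≤ (n - 1) / 2 ∧ p = qPt n i) ∨ ∃ j, 0 ≤ j ∧ j ≤ n / 2 ∧ p = rPt n j := by
  have hq : (if Odd n then (n - 1) / 2 else (n - 2) / 2) = (n - 1) / 2 := by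
    split_ifs with h <;> [rfl; (rw [Int.not_odd_iff] at h; omega)]
  have hr : (if Odd n then (n - 1) / 2 else n / 2) = n / 2 := by
    split_ifs with h <;> [(rw [Int.odd_iff] at h; omega); rfl]
  simp only [Pset, hq, hr, ← pPt_eq, ← sPt_eq, Set.mem_union, Set.mem_insert_iff,
    Set.mem_singleton_iff, Set.mem_ofPred_eq, or_assoc]

lemma Pset_subset_farRegion {n : ℤ} (hn : 0 ≤ n) : Pset n ⊆ farRegion n := by
  intro p hp
  rcases mem_Pset_iff_s7.1 hp with rfl | rfl | ⟨i, -, -, rfl⟩ | ⟨j, hj, -, rfl⟩ <;>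
    simp only [farRegion, Set.mem_ofPred_eq, qPt, rPt] <;> omega

lemma farRegion_add_sigmaZ_subset (n : ℤ) : farRegion n + sigmaZ ⊆ farRegion n := by
  rintro _ ⟨x, hx, s, ⟨hs₀, hs⟩, rfl⟩
  simp only [farRegion, Set.mem_ofPred_eq, Prod.fst_add, Prod.snd_add] at hx ⊢
  omega

lemma sigmaZ_inter_farRegion_subset {n : ℤ} (hn : 0 ≤ n) :
    sigmaZ ∩ farRegion n ⊆ Pset n + sigmaZ := by
  rintro x ⟨⟨hb, hσ⟩, hx⟩
  simp only [farRegion, Set.mem_ofPred_eq] at hx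
  suffices ∃ p ∈ Pset n, p.2 ≤ x.2 ∧ 3 * (x.2 - p.2) ≤ 4 * (x.1 - p.1) by
    obtain ⟨p, hp, h₀, h⟩ := this
    exact ⟨p, hp, x - p, ⟨by simpa using h₀, by simpa using h⟩, add_sub_cancel p x⟩
  by_cases hs : 4 * ((n + 2) / 2) ≤ x.2
  · exact ⟨_, mem_Pset_iff_s7.2 (Or.inr (Or.inl rfl)), by simp only; omega⟩
  by_cases hr : n + 1 ≤ x.2
  · refine ⟨rPt n (min ((x.2 - n - 1) / 2) (n / 2)),
      mem_Pset_iff_s7.2 (Or.inr (Or.inr (Or.inr ⟨_, by omega, by omega, rfl⟩))), ?_⟩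
    simp only [rPt]
    omega
  -- the heights `n - 2i` of the points `qPt n i` run down to `2 - n % 2`
  by_cases hq : 2 - n % 2 ≤ x.2
  · refine ⟨qPt n ((n - x.2 + 1) / 2),
      mem_Pset_iff_s7.2 (Or.inr (Or.inr (Or.inl ⟨_, by omega, by omega, rfl⟩))), ?_⟩
    simp only [qPt]
    omega
  · refine ⟨_, mem_Pset_iff_s7.2 (Or.inl rfl), ?_⟩
    obtain h | h : x.2 = 0 ∨ x.2 = 1 := by omega
    all_goals simp only [h]; omega

theorem mem_Pset_add_sigmaZ_iff {n : ℤ} (hn : 0 ≤ n) {x : ℤ × ℤ} (hx : x ∈ sigmaZ) :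
    x ∈ Pset n + sigmaZ ↔ x ∈ farRegion n :=
  ⟨fun h => farRegion_add_sigmaZ_subset n (Set.add_subset_add_right (Pset_subset_farRegion hn) h),
    fun h => sigmaZ_inter_farRegion_subset hn ⟨hx, h⟩⟩

lemma Dset_eq {n : ℤ} (hn : 0 ≤ n) : Dset n = sigmaZ \ farRegion n := by
  ext x
  simp only [Dset, Set.mem_sdiff, and_congr_right_iff]
  intro hx
  rw [mem_Pset_add_sigmaZ_iff hn hx]

open Finset in
noncomputable def latticeSegment (u lo hi : ℤ) : Finset (ℤ × ℤ) :=
  (Icc lo hi).image fun a => (a, 2 * a - u)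

lemma mem_latticeSegment {u lo hi : ℤ} {x : ℤ × ℤ} :
    x ∈ latticeSegment u lo hi ↔ lo ≤ x.1 ∧ x.1 ≤ hi ∧ 2 * x.1 - x.2 = u := by
  simp only [latticeSegment, Finset.mem_image, Finset.mem_Icc]
  constructor
  · rintro ⟨a, ha, rfl⟩
    exact ⟨ha.1, ha.2, by ring⟩
  · rintro ⟨h₁, h₂, rfl⟩
    exact ⟨x.1, ⟨h₁, h₂⟩, by ext <;> simp⟩

lemma card_latticeSegment (u lo hi : ℤ) :
    (latticeSegment u lo hi).card = (hi + 1 - lo).toNat := by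
  rw [latticeSegment, Finset.card_image_of_injective _ fun a b h => congrArg Prod.fst h,
    Int.card_Icc]

open Finset in
noncomputable def sigmaZBelow (k : ℕ) : Finset (ℤ × ℤ) :=
  (range (k + 1)).biUnion fun u => latticeSegment u ((u + 1) / 2) (3 * u / 2)

lemma mem_sigmaZBelow {k : ℕ} {x : ℤ × ℤ} :
    x ∈ sigmaZBelow k ↔ x ∈ sigmaZ ∧ 2 * x.1 - x.2 ≤ k := by
  simp only [sigmaZBelow, Finset.mem_biUnion, Finset.mem_range, mem_latticeSegment, sigmaZ,
    Set.mem_ofPred_eq]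
  constructor
  · rintro ⟨u, hu, h₁, h₂, hx⟩
    omega
  · rintro ⟨⟨h₁, h₂⟩, h₃⟩
    exact ⟨(2 * x.1 - x.2).toNat, by omega, by omega, by omega, by omega⟩

lemma disjoint_sigmaZBelow_latticeSegment {k : ℕ} {u : ℤ} (hu : k < u) (lo hi : ℤ) :
    Disjoint (sigmaZBelow k) (latticeSegment u lo hi) := by
  rw [Finset.disjoint_left]
  intro x hx hx'
  rw [mem_sigmaZBelow] at hx
  rw [mem_latticeSegment] at hx'
  omega

lemma card_sigmaZBelow (k : ℕ) :
    (sigmaZBelow k).card + (k + 1) / 2 = (k + 1) * (k + 2) / 2 := by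
  induction k with
  | zero => decide
  | succ k ih =>
    rw [sigmaZBelow, Finset.range_add_one, Finset.biUnion_insert, Finset.union_comm,
      ← sigmaZBelow, Finset.card_union_of_disjoint
        (disjoint_sigmaZBelow_latticeSegment (by omega) _ _), card_latticeSegment]
    have hstep : (k + 1 + 1) * (k + 1 + 2) / 2 = (k + 1) * (k + 2) / 2 + (k + 2) := by
      rw [show (k + 1 + 1) * (k + 1 + 2) = (k + 1) * (k + 2) + 2 * (k + 2) by ring,
        Nat.add_mul_div_left _ _ two_pos]
    rw [hstep, ← ih]
    rcases Nat.mod_two_eq_zero_or_one k with h | h <;> omega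

lemma sigmaZ_diff_farRegion (k : ℕ) :
    sigmaZ \ farRegion k = ↑(sigmaZBelow k ∪ latticeSegment (k + 1) ((k + 2) / 2) k) := by
  ext x
  simp only [Finset.coe_union, Set.mem_union, Finset.mem_coe, mem_sigmaZBelow,
    mem_latticeSegment, Set.mem_sdiff, farRegion, sigmaZ, Set.mem_ofPred_eq]
  omega

theorem Dset_ncard_general (n : ℕ) : (Dset (n : ℤ)).ncard = (n + 1) * (n + 2) / 2 := by
  rw [Dset_eq n.cast_nonneg, sigmaZ_diff_farRegion, Set.ncard_coe_finset,
    Finset.card_union_of_disjoint (disjoint_sigmaZBelow_latticeSegment (by omega) _ _),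
    card_latticeSegment, ← card_sigmaZBelow n]
  omega

/-- for every integer `n ≥ 1`, the set `D_n` has exactly
`(n+1)(n+2)/2` elements. -/
theorem Dset_ncard (n : ℕ) (hn : 1 ≤ n) : (Dset (n : ℤ)).ncard = (n + 1) * (n + 2) / 2 :=
  Dset_ncard_general n
end

section
/- For every integer n ≥ 1, the colon ideal (J_n : uv−1) in S equals J_{n−1}; that is, {f ∈ S : (uv−1)·f ∈ J_n} = J_{n−1}. -/
set_option synthInstance.maxHeartbeats 1000000
set_option maxHeartbeats 1000000

open Pointwise MvPolynomial

/-- The polynomial ring `ℂ[u,v]`. -/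
abbrev CuvPoly : Type := MvPolynomial (Fin 2) ℂ

/-- The variable `u`. -/
noncomputable def uP : CuvPoly := X 0

/-- The variable `v`. -/
noncomputable def vP : CuvPoly := X 1

/-- `S`, the `ℂ`-subalgebra of `ℂ[u,v]` generated by `u`, `u³v⁴` and `uv`. -/
noncomputable def Ssub : Subalgebra ℂ CuvPoly :=
  Algebra.adjoin ℂ {uP, uP ^ 3 * vP ^ 4, uP * vP}

/-- `u` as an element of `S`. -/
noncomputable def U : Ssub := ⟨uP, Algebra.subset_adjoin (by simp)⟩

/-- `u³v⁴` as an element of `S`. -/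
noncomputable def Y : Ssub := ⟨uP ^ 3 * vP ^ 4, Algebra.subset_adjoin (by simp)⟩

/-- `uv` as an element of `S`. -/
noncomputable def UV : Ssub := ⟨uP * vP, Algebra.subset_adjoin (by simp)⟩

/-- The ideal `I = ⟨u−1, u³v⁴−1, uv−1⟩` of `S`. -/
noncomputable def Iid : Ideal Ssub := Ideal.span {U - 1, Y - 1, UV - 1}

/-- The ideal `J_n = I^{n+1}` of `S`. -/
noncomputable def Jid (n : ℕ) : Ideal Ssub := Iid ^ (n + 1)

/-! Write `u = 1 + x`, `v = 1 + y`. In `ℂ[u,v]` the ideal `I` generates `(x, y)`, and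
`uv - 1 = x + y + xy` has order one at the origin; orders of polynomials add, so
`(uv - 1) f ∈ (x, y)^(n+1)` forces `f ∈ (x, y)^n`. Since `ℂ[u,v] ⊆ S[1/u]`, this gives
`u^k f ∈ I^n` for some `k`, and `u ≡ 1` modulo `I` makes `u` a unit modulo `I^n`. -/

theorem Ideal.mem_pow_of_mul_mem_pow {A : Type*} [CommRing A] {I : Ideal A} {a f : A} {n : ℕ}
    (ha : a - 1 ∈ I) (h : a * f ∈ I ^ n) : f ∈ I ^ n := by
  have hnil : IsNilpotent (Ideal.Quotient.mk (I ^ n) (a - 1)) :=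
    ⟨n, by rw [← map_pow, Ideal.Quotient.eq_zero_iff_mem]; exact Ideal.pow_mem_pow ha n⟩
  have hunit : IsUnit (Ideal.Quotient.mk (I ^ n) a) := by
    simpa using hnil.isUnit_add_one
  rw [← Ideal.Quotient.eq_zero_iff_mem, map_mul] at h
  rw [← Ideal.Quotient.eq_zero_iff_mem]
  exact hunit.mul_right_eq_zero.mp h

theorem Ideal.exists_pow_mul_eq_of_mem_map {S A : Type*} [CommRing S] [CommRing A] [Algebra S A]
    {u : S} (hu : ∀ a : A, ∃ k : ℕ, ∃ s : S, algebraMap S A (u ^ k) * a = algebraMap S A s)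
    {I : Ideal S} {x : A} (hx : x ∈ I.map (algebraMap S A)) :
    ∃ k : ℕ, ∃ y ∈ I, algebraMap S A (u ^ k) * x = algebraMap S A y := by
  induction hx using Submodule.span_induction with
  | mem x hx =>
    obtain ⟨y, hy, rfl⟩ := hx
    exact ⟨0, y, hy, by simp⟩
  | zero => exact ⟨0, 0, I.zero_mem, by simp⟩
  | add x₁ x₂ _ _ h₁ h₂ =>
    obtain ⟨k₁, y₁, hy₁, e₁⟩ := h₁
    obtain ⟨k₂, y₂, hy₂, e₂⟩ := h₂
    refine ⟨k₁ + k₂, u ^ k₂ * y₁ + u ^ k₁ * y₂,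
      I.add_mem (I.mul_mem_left _ hy₁) (I.mul_mem_left _ hy₂), ?_⟩
    simp only [map_add, map_mul, map_pow] at e₁ e₂ ⊢
    rw [← e₁, ← e₂]
    ring
  | smul a x _ hx =>
    obtain ⟨k, y, hy, e⟩ := hx
    obtain ⟨j, s, hs⟩ := hu a
    refine ⟨j + k, s * y, I.mul_mem_left _ hy, ?_⟩
    simp only [map_mul, map_pow, smul_eq_mul] at e hs ⊢
    rw [← e, ← hs]
    ring

namespace MvPolynomial

variable {σ R : Type*}

theorem mem_pow_idealOfVars_iff_le_order [CommSemiring R] {n : ℕ} {p : MvPolynomial σ R} :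
    p ∈ idealOfVars σ R ^ n ↔ (n : ℕ∞) ≤ (p : MvPowerSeries σ R).order := by
  rw [mem_pow_idealOfVars_iff']
  refine ⟨fun h => MvPowerSeries.nat_le_order fun d hd => by rw [coeff_coe, h d hd],
    fun h d hd => ?_⟩
  rw [← coeff_coe]
  exact MvPowerSeries.coeff_of_lt_order (lt_of_lt_of_le (by exact_mod_cast hd) h)

theorem mem_pow_idealOfVars_of_mul_mem [CommSemiring R] [NoZeroDivisors R]
    {w p : MvPolynomial σ R} {k n : ℕ} (hw : w ∉ idealOfVars σ R ^ (k + 1))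
    (h : w * p ∈ idealOfVars σ R ^ (n + k)) :
    p ∈ idealOfVars σ R ^ n := by
  rw [mem_pow_idealOfVars_iff_le_order] at hw h ⊢
  rw [coe_mul, MvPowerSeries.order_mul] at h
  have hwk : (w : MvPowerSeries σ R).order ≤ k := by
    rw [not_le, Nat.cast_add, Nat.cast_one] at hw
    exact Order.le_of_lt_add_one hw
  have : (n : ℕ∞) + k ≤ (p : MvPowerSeries σ R).order + k := by
    rw [← Nat.cast_add, add_comm _ (k : ℕ∞)]
    exact h.trans (by gcongr)
  exact (WithTop.add_le_add_iff_right (ENat.natCast_ne_top k)).mp this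

section Translate

variable [CommRing R]

noncomputable def translate (a : σ → R) : MvPolynomial σ R ≃ₐ[R] MvPolynomial σ R :=
  AlgEquiv.ofAlgHom (aeval fun i => X i + C (a i)) (aeval fun i => X i - C (a i))
    (algHom_ext fun i => by simp) (algHom_ext fun i => by simp)

@[simp]
theorem translate_X (a : σ → R) (i : σ) : translate a (X i) = X i + C (a i) :=
  aeval_X _ i

@[simp]
theorem translate_C (a : σ → R) (r : R) : translate a (C r) = C r :=
  (translate a).commutes r

noncomputable def idealOfPoint (a : σ → R) : Ideal (MvPolynomial σ R) :=
  Ideal.span (Set.range fun i => X i - C (a i))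

theorem map_translate_idealOfPoint (a : σ → R) :
    (idealOfPoint a).map (translate a) = idealOfVars σ R := by
  rw [idealOfPoint, Ideal.map_span, ← Set.range_comp]
  congr 1
  ext
  simp

theorem translate_mem_pow_idealOfVars_iff {a : σ → R} {n : ℕ} {p : MvPolynomial σ R} :
    translate a p ∈ idealOfVars σ R ^ n ↔ p ∈ idealOfPoint a ^ n := by
  rw [← map_translate_idealOfPoint, ← Ideal.map_pow]
  exact Ideal.apply_mem_of_equiv_iff (f := (translate a).toRingEquiv)

end Translate

theorem mem_pow_idealOfPoint_one_of_mul_mem [CommRing R] [IsDomain R] {n : ℕ}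
    {p : MvPolynomial (Fin 2) R} (h : (X 0 * X 1 - 1) * p ∈ idealOfPoint 1 ^ (n + 1)) :
    p ∈ idealOfPoint 1 ^ n := by
  rw [← translate_mem_pow_idealOfVars_iff] at h ⊢
  rw [map_mul] at h
  refine mem_pow_idealOfVars_of_mul_mem (k := 1) ?_ h
  have hw : translate 1 (X 0 * X 1 - 1 : MvPolynomial (Fin 2) R) = X 0 + X 1 + X 0 * X 1 := by
    simp only [map_sub, map_mul, translate_X, Pi.one_apply, map_one]
    ring
  rw [hw, mem_pow_idealOfVars_iff']
  intro h0
  have := h0 (Finsupp.single 0 1) (by simp)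
  simp [coeff_X, coeff_mul_X', Finsupp.single_eq_single_iff] at this

end MvPolynomial

theorem exists_uP_pow_mul_mem_Ssub (c : CuvPoly) : ∃ k : ℕ, uP ^ k * c ∈ Ssub := by
  have hu : uP ∈ Ssub := U.2
  have huv : uP * vP ∈ Ssub := UV.2
  induction c using MvPolynomial.induction_on with
  | C a => exact ⟨0, by simpa using Ssub.algebraMap_mem a⟩
  | add p q hp hq =>
    obtain ⟨k₁, h₁⟩ := hp
    obtain ⟨k₂, h₂⟩ := hq
    refine ⟨k₁ + k₂, ?_⟩
    rw [show uP ^ (k₁ + k₂) * (p + q) =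
      uP ^ k₂ * (uP ^ k₁ * p) + uP ^ k₁ * (uP ^ k₂ * q) by ring]
    exact Ssub.add_mem (Ssub.mul_mem (Ssub.pow_mem hu _) h₁)
      (Ssub.mul_mem (Ssub.pow_mem hu _) h₂)
  | mul_X p i hp =>
    obtain ⟨k, h⟩ := hp
    fin_cases i
    · refine ⟨k, ?_⟩
      have : uP ^ k * (p * X 0) = uP ^ k * p * uP := by rw [uP]; ring
      simpa [this] using Ssub.mul_mem h hu
    · refine ⟨k + 1, ?_⟩
      have : uP ^ (k + 1) * (p * X 1) = uP ^ k * p * (uP * vP) := by rw [vP]; ring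
      simpa [this] using Ssub.mul_mem h huv

theorem U_sub_one_mem_Iid : U - 1 ∈ Iid := Ideal.subset_span (by simp)

theorem UV_sub_one_mem_Iid : UV - 1 ∈ Iid := Ideal.subset_span (by simp)

theorem map_Iid : Iid.map (algebraMap Ssub CuvPoly) = MvPolynomial.idealOfPoint 1 := by
  set M : Ideal CuvPoly := MvPolynomial.idealOfPoint 1
  have hu : X 0 - 1 ∈ M := Ideal.subset_span ⟨0, by simp⟩
  have hv : X 1 - 1 ∈ M := Ideal.subset_span ⟨1, by simp⟩
  have hU : algebraMap Ssub CuvPoly (U - 1) = X 0 - 1 := rfl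
  have hY : algebraMap Ssub CuvPoly (Y - 1) = X 0 ^ 3 * X 1 ^ 4 - 1 := rfl
  have hUV : algebraMap Ssub CuvPoly (UV - 1) = X 0 * X 1 - 1 := rfl
  apply le_antisymm
  · rw [Iid, Ideal.map_span, Ideal.span_le]
    rintro _ ⟨g, hg | hg | hg, rfl⟩ <;> subst hg
    · rwa [hU]
    · rw [hY, show (X 0 ^ 3 * X 1 ^ 4 - 1 : CuvPoly) = (X 0 ^ 2 + X 0 + 1) * X 1 ^ 4 * (X 0 - 1)
        + (X 1 ^ 3 + X 1 ^ 2 + X 1 + 1) * (X 1 - 1) by ring]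
      exact M.add_mem (M.mul_mem_left _ hu) (M.mul_mem_left _ hv)
    · rw [hUV, show (X 0 * X 1 - 1 : CuvPoly) = X 1 * (X 0 - 1) + (X 1 - 1) by ring]
      exact M.add_mem (M.mul_mem_left _ hu) hv
  · have hU' := Ideal.mem_map_of_mem (algebraMap Ssub CuvPoly) U_sub_one_mem_Iid
    have hUV' := Ideal.mem_map_of_mem (algebraMap Ssub CuvPoly) UV_sub_one_mem_Iid
    rw [hU] at hU'
    rw [hUV] at hUV'
    refine Ideal.span_le.mpr (Set.range_subset_iff.mpr fun i => ?_)
    fin_cases i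
    · simpa using hU'
    · have : (X 1 - 1 : CuvPoly) = (X 0 * X 1 - 1) - X 1 * (X 0 - 1) := by ring
      simpa [this] using Ideal.sub_mem _ hUV' (Ideal.mul_mem_left _ (X 1) hU')

/-- for every integer `n ≥ 1`, the colon ideal `(J_n : uv−1)` in `S`
equals `J_{n−1}`: `{f ∈ S : (uv−1)·f ∈ J_n} = J_{n−1}`. -/
theorem colon_Jid (n : ℕ) (hn : 1 ≤ n) :
    {f : Ssub | (UV - 1) * f ∈ Jid n} = (Jid (n - 1) : Set Ssub) := by
  obtain ⟨m, rfl⟩ : ∃ m, n = m + 1 := ⟨n - 1, by omega⟩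
  ext f
  simp only [Set.mem_ofPred_eq, SetLike.mem_coe, Jid, Nat.add_sub_cancel]
  refine ⟨fun h => ?_, fun hf => pow_succ' Iid _ ▸ Ideal.mul_mem_mul UV_sub_one_mem_Iid hf⟩
  have hpoly : (f : CuvPoly) ∈ MvPolynomial.idealOfPoint 1 ^ (m + 1) := by
    refine MvPolynomial.mem_pow_idealOfPoint_one_of_mul_mem ?_
    rw [← map_Iid, ← Ideal.map_pow]
    exact Ideal.mem_map_of_mem (algebraMap Ssub CuvPoly) h
  rw [← map_Iid, ← Ideal.map_pow] at hpoly
  have hsat (c : CuvPoly) : ∃ k : ℕ, ∃ s : Ssub,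
      algebraMap Ssub CuvPoly (U ^ k) * c = algebraMap Ssub CuvPoly s :=
    let ⟨k, hk⟩ := exists_uP_pow_mul_mem_Ssub c
    ⟨k, ⟨_, hk⟩, rfl⟩
  obtain ⟨k, y, hy, hk⟩ := Ideal.exists_pow_mul_eq_of_mem_map hsat hpoly
  have hUk : U ^ k * f = y := Subtype.val_injective hk
  refine Ideal.mem_pow_of_mul_mem_pow ?_ (hUk ▸ hy)
  exact Ideal.mem_of_dvd _ (sub_one_dvd_pow_sub_one U k) U_sub_one_mem_Iid
end

section
/- Let φ: ℂ[u,v] → ℂ[λ, λ⁻¹] be the ℂ-algebra homomorphism determined by φ(u) = λ⁻¹ and φ(v) = λ, into the ring of Laurent polynomials in λ over ℂ. Then the restriction of φ to S is surjective onto ℂ[λ, λ⁻¹], and its kernel {f ∈ S : φ(f) = 0} equals the ideal of S generated by uv − 1. -/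
set_option synthInstance.maxHeartbeats 1000000
set_option maxHeartbeats 1000000

open Pointwise MvPolynomial

/-- The `ℂ`-algebra homomorphism `φ : ℂ[u,v] → ℂ[λ,λ⁻¹]` with `φ(u) = λ⁻¹`, `φ(v) = λ`. -/
noncomputable def phiMap : CuvPoly →ₐ[ℂ] LaurentPolynomial ℂ :=
  aeval (fun i : Fin 2 => if i = 0 then LaurentPolynomial.T (-1) else LaurentPolynomial.T 1)

/-- The restriction of `φ` to `S`. -/
noncomputable def phiS : Ssub →ₐ[ℂ] LaurentPolynomial ℂ := phiMap.comp Ssub.val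

open LaurentPolynomial

lemma phiMap_u : phiMap uP = T (-1) := by simp [phiMap, uP]
lemma phiMap_v : phiMap vP = T 1 := by simp [phiMap, vP]

lemma phiS_U : phiS U = T (-1) := phiMap_u

lemma phiS_Y : phiS Y = T 1 := by
  rw [show phiS Y = phiMap (uP ^ 3 * vP ^ 4) from rfl]
  rw [map_mul, map_pow, map_pow, phiMap_u, phiMap_v, T_pow, T_pow, ← T_add]
  norm_num

lemma phiS_UV : phiS UV = 1 := by
  show phiMap (uP * vP) = 1
  rw [map_mul, phiMap_u, phiMap_v, ← T_add]
  norm_num [T_zero]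

lemma UY : U * Y = UV ^ 4 := by
  apply Subtype.ext
  show uP * (uP ^ 3 * vP ^ 4) = (uP * vP) ^ 4
  ring

lemma adjoin_top : Algebra.adjoin ℂ ({U, Y, UV} : Set Ssub) = ⊤ := by
  have hpre : Algebra.adjoin ℂ (((↑) : Ssub → CuvPoly) ⁻¹' {uP, uP ^ 3 * vP ^ 4, uP * vP}) =
      (⊤ : Subalgebra ℂ Ssub) := Algebra.adjoin_adjoin_coe_preimage
  rw [← hpre]
  apply le_antisymm <;> apply Algebra.adjoin_mono
  · rintro x (rfl | rfl | rfl)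
    · exact Or.inl rfl
    · exact Or.inr (Or.inl rfl)
    · exact Or.inr (Or.inr rfl)
  · rintro ⟨x, hx⟩ (h | h | h)
    · exact Or.inl (Subtype.ext h)
    · exact Or.inr (Or.inl (Subtype.ext h))
    · exact Or.inr (Or.inr (Subtype.ext h))

noncomputable def piQ : Ssub →ₐ[ℂ] (Ssub ⧸ Ideal.span {UV - 1}) :=
  Ideal.Quotient.mkₐ ℂ _

lemma piQ_UV : piQ UV = 1 := by
  have h : piQ (UV - 1) = 0 :=
    Ideal.Quotient.eq_zero_iff_mem.2 (Ideal.subset_span rfl)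
  rw [map_sub, map_one, sub_eq_zero] at h
  exact h

lemma YU : Y * U = UV ^ 4 := by
  apply Subtype.ext
  show (uP ^ 3 * vP ^ 4) * uP = (uP * vP) ^ 4
  ring

lemma piQ_UY : piQ U * piQ Y = 1 := by
  rw [← map_mul, UY, map_pow, piQ_UV]
  exact one_pow 4

lemma piQ_YU : piQ Y * piQ U = 1 := by
  rw [← map_mul, YU, map_pow, piQ_UV]
  exact one_pow 4

noncomputable def yUnit : (Ssub ⧸ Ideal.span {UV - 1})ˣ :=
  ⟨piQ Y, piQ U, piQ_YU, piQ_UY⟩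

noncomputable def psi : LaurentPolynomial ℂ →ₐ[ℂ] (Ssub ⧸ Ideal.span {UV - 1}) :=
  AddMonoidAlgebra.lift ℂ _ ℤ ((Units.coeHom _).comp (zpowersHom _ yUnit))

lemma psi_T (n : ℤ) : psi (T n) = ((yUnit ^ n : _ˣ) : Ssub ⧸ Ideal.span {UV - 1}) := by
  show psi (AddMonoidAlgebra.single n 1) = _
  rw [psi, AddMonoidAlgebra.lift_single]
  simp [zpowersHom_apply]

lemma psi_comp : psi.comp phiS = piQ := by
  have hle : Algebra.adjoin ℂ ({U, Y, UV} : Set Ssub) ≤ AlgHom.equalizer (psi.comp phiS) piQ := by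
    apply Algebra.adjoin_le
    rintro x (rfl | rfl | rfl)
    · show psi (phiS U) = piQ U
      rw [phiS_U, psi_T, zpow_neg, zpow_one]
      rfl
    · show psi (phiS Y) = piQ Y
      rw [phiS_Y, psi_T, zpow_one]
      rfl
    · show psi (phiS UV) = piQ UV
      rw [phiS_UV, map_one, piQ_UV]
  ext x
  have := hle (adjoin_top ▸ Algebra.mem_top (x := x))
  exact this


/-- the restriction of `φ` to `S` is surjective onto `ℂ[λ,λ⁻¹]`, and its
kernel equals the ideal of `S` generated by `uv − 1`. -/
theorem phiS_surjective_and_ker :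
    Function.Surjective phiS ∧ RingHom.ker phiS = Ideal.span {UV - 1} := by
  constructor
  · intro p
    suffices h : p ∈ phiS.range by exact h
    induction p using LaurentPolynomial.induction_on' with
    | add p q hp hq => exact add_mem hp hq
    | C_mul_T n a =>
      apply mul_mem
      · rw [LaurentPolynomial.C_eq_algebraMap]
        exact Subalgebra.algebraMap_mem _ a
      · refine ⟨Y ^ n.toNat * U ^ (-n).toNat, ?_⟩
        show phiS (Y ^ n.toNat * U ^ (-n).toNat) = T n
        rw [map_mul, map_pow, map_pow, phiS_Y, phiS_U, T_pow, T_pow, ← T_add]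
        congr 1
        omega
  · apply le_antisymm
    · intro x hx
      rw [RingHom.mem_ker] at hx
      have h := DFunLike.congr_fun psi_comp x
      rw [AlgHom.comp_apply, hx, map_zero] at h
      exact Ideal.Quotient.eq_zero_iff_mem.1 h.symm
    · rw [Ideal.span_le, Set.singleton_subset_iff]
      show UV - 1 ∈ RingHom.ker phiS
      rw [RingHom.mem_ker, map_sub, phiS_UV, map_one, sub_self]
end
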